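/- The function f(x) = x/tanh(x) − log(cosh(x))/tanh(x)² is strictly increasing on (0, ∞), with f(x) → 1/2 as x → 0⁺ and f(x) → log 2 as x → ∞. -/

import Mathlib

noncomputable def f (x : ℝ) : ℝ :=
  x / Real.tanh x - Real.log (Real.cosh x) / Real.tanh x ^ 2

/-!
Write `f x = N x / tanh x ^ 2` with `N x = x tanh x - log cosh x`. A direct computation gives
`f' = sech² x · (2 log cosh x - x tanh x) / tanh³ x`, and `2 log cosh x - x tanh x` is positive on
`(0, ∞)` because it vanishes at `0` and its derivative `tanh x - x sech² x` vanishes at `0` and has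
derivative `2 x tanh x sech² x > 0`. At `0⁺`, one application of l'Hôpital's rule turns `N / tanh²`
into `x / (2 tanh x) → 1/2`. At `∞`, `tanh x → 1`, `x (1 - tanh x) → 0` and
`x - log cosh x = log 2 - log (1 + e^{-2x}) → log 2`, so `N → log 2`.
-/

open Real Set Filter Topology

theorem lt_of_hasDerivAt_pos {φ φ' : ℝ → ℝ} {a b : ℝ} (hφ : ∀ x, HasDerivAt φ (φ' x) x)
    (hφ' : ∀ x ∈ Ioo a b, 0 < φ' x) (hab : a < b) : φ a < φ b := by
  refine strictMonoOn_of_deriv_pos (convex_Icc a b)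
    (fun x _ => (hφ x).continuousAt.continuousWithinAt) (fun x hx => ?_)
    (left_mem_Icc.2 hab.le) (right_mem_Icc.2 hab.le) hab
  rw [interior_Icc] at hx
  rw [(hφ x).deriv]
  exact hφ' x hx

namespace Real

theorem hasDerivAt_tanh (x : ℝ) : HasDerivAt tanh (1 - tanh x ^ 2) x := by
  have h := (hasDerivAt_sinh x).div (hasDerivAt_cosh x) (cosh_pos x).ne'
  rw [show sinh / cosh = tanh from funext fun y => (tanh_eq_sinh_div_cosh y).symm] at h
  refine h.congr_deriv ?_
  have := cosh_pos x
  rw [tanh_eq_sinh_div_cosh]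
  field_simp

theorem tanh_pos {x : ℝ} (hx : 0 < x) : 0 < tanh x := by
  rw [tanh_eq_sinh_div_cosh]
  exact div_pos (sinh_pos_iff.2 hx) (cosh_pos x)

theorem one_sub_tanh_sq_pos (x : ℝ) : 0 < 1 - tanh x ^ 2 :=
  sub_pos.2 (tanh_sq_lt_one x)

theorem hasDerivAt_log_cosh (x : ℝ) : HasDerivAt (fun y => log (cosh y)) (tanh x) x := by
  simpa only [← tanh_eq_sinh_div_cosh] using (hasDerivAt_cosh x).log (cosh_pos x).ne'

theorem tanh_sub_mul_one_sub_tanh_sq_pos {x : ℝ} (hx : 0 < x) :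
    0 < tanh x - x * (1 - tanh x ^ 2) := by
  have hderiv (y : ℝ) : HasDerivAt (fun y => tanh y - y * (1 - tanh y ^ 2))
      (2 * y * tanh y * (1 - tanh y ^ 2)) y := by
    have := (hasDerivAt_tanh y).sub
      ((hasDerivAt_id y).mul ((hasDerivAt_const y 1).sub ((hasDerivAt_tanh y).pow 2)))
    exact this.congr_deriv (by simp only [id, Pi.sub_apply, Pi.pow_apply]; ring)
  have hpos (y : ℝ) (hy : y ∈ Ioo 0 x) : 0 < 2 * y * tanh y * (1 - tanh y ^ 2) :=
    mul_pos (mul_pos (mul_pos two_pos hy.1) (tanh_pos hy.1)) (one_sub_tanh_sq_pos y)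
  simpa using lt_of_hasDerivAt_pos hderiv hpos hx

theorem mul_tanh_lt_two_mul_log_cosh {x : ℝ} (hx : 0 < x) : x * tanh x < 2 * log (cosh x) := by
  have hderiv (y : ℝ) : HasDerivAt (fun y => 2 * log (cosh y) - y * tanh y)
      (tanh y - y * (1 - tanh y ^ 2)) y := by
    have := ((hasDerivAt_log_cosh y).const_mul 2).sub ((hasDerivAt_id y).mul (hasDerivAt_tanh y))
    exact this.congr_deriv (by simp only [id]; ring)
  have := lt_of_hasDerivAt_pos hderiv (fun y hy => tanh_sub_mul_one_sub_tanh_sq_pos hy.1) hx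
  simp only [cosh_zero, log_one, tanh_zero, mul_zero, sub_zero] at this
  linarith

theorem tendsto_div_tanh_nhdsGT_zero : Tendsto (fun x => x / tanh x) (𝓝[>] 0) (𝓝 1) := by
  have h := (hasDerivAt_tanh 0).tendsto_slope_zero_right
  simp only [zero_add, tanh_zero, sub_zero, smul_eq_mul, ne_eq, OfNat.ofNat_ne_zero,
    not_false_eq_true, zero_pow] at h
  simpa [div_eq_mul_inv, mul_comm] using h.inv₀ one_ne_zero

theorem one_sub_tanh_eq (x : ℝ) : 1 - tanh x = 2 * exp (-(2 * x)) / (1 + exp (-(2 * x))) := by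
  rw [tanh_eq, exp_neg, exp_neg, show 2 * x = x + x by ring, exp_add]
  have := exp_pos x
  field_simp
  ring

theorem log_cosh_eq (x : ℝ) : log (cosh x) = x - log 2 + log (1 + exp (-(2 * x))) := by
  have hcosh : cosh x = exp x * (1 + exp (-(2 * x))) / 2 := by
    rw [cosh_eq, show -(2 * x) = -x + -x by ring, exp_add, mul_add, ← mul_assoc, ← exp_add]
    simp
  rw [hcosh, log_div (by positivity) two_ne_zero, log_mul (exp_ne_zero x) (by positivity), log_exp]
  ring

theorem tendsto_exp_neg_two_mul_atTop : Tendsto (fun x => exp (-(2 * x))) atTop (𝓝 0) :=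
  tendsto_exp_atBot.comp <| tendsto_neg_atTop_atBot.comp <| tendsto_id.const_mul_atTop two_pos

theorem tendsto_mul_one_sub_tanh_atTop : Tendsto (fun x => x * (1 - tanh x)) atTop (𝓝 0) := by
  have hxe : Tendsto (fun x => 2 * x * exp (-(2 * x))) atTop (𝓝 0) := by
    simpa [Function.comp_def] using (tendsto_pow_mul_exp_neg_atTop_nhds_zero 1).comp
      (tendsto_id.const_mul_atTop two_pos)
  have : Tendsto (fun x => 2 * x * exp (-(2 * x)) / (1 + exp (-(2 * x)))) atTop (𝓝 (0 / (1 + 0))) :=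
    hxe.div (tendsto_exp_neg_two_mul_atTop.const_add 1) (by norm_num)
  rw [add_zero, zero_div] at this
  refine this.congr fun x => ?_
  rw [one_sub_tanh_eq]
  ring

theorem tendsto_tanh_atTop : Tendsto tanh atTop (𝓝 1) := by
  have : Tendsto (fun x => 1 - 2 * exp (-(2 * x)) / (1 + exp (-(2 * x)))) atTop
      (𝓝 (1 - 2 * 0 / (1 + 0))) :=
    ((tendsto_exp_neg_two_mul_atTop.const_mul 2).div
      (tendsto_exp_neg_two_mul_atTop.const_add 1) (by norm_num)).const_sub 1
  rw [mul_zero, zero_div, sub_zero] at this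
  exact this.congr fun x => by rw [← one_sub_tanh_eq, sub_sub_cancel]

theorem tendsto_sub_log_cosh_atTop : Tendsto (fun x => x - log (cosh x)) atTop (𝓝 (log 2)) := by
  have : Tendsto (fun x => log 2 - log (1 + exp (-(2 * x)))) atTop (𝓝 (log 2 - log (1 + 0))) :=
    ((continuousAt_log (by norm_num)).tendsto.comp
      (tendsto_exp_neg_two_mul_atTop.const_add 1)).const_sub _
  rw [add_zero, log_one, sub_zero] at this
  exact this.congr fun x => by rw [log_cosh_eq]; ring

end Real

theorem f_eq_div (x : ℝ) : f x = (x * tanh x - log (cosh x)) / tanh x ^ 2 := by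
  rcases eq_or_ne (tanh x) 0 with h | h
  · simp [f, h]
  · rw [f]
    field_simp

theorem hasDerivAt_f {x : ℝ} (hx : tanh x ≠ 0) :
    HasDerivAt f ((1 - tanh x ^ 2) * (2 * log (cosh x) - x * tanh x) / tanh x ^ 3) x := by
  have := ((hasDerivAt_id x).div (hasDerivAt_tanh x) hx).sub
    ((hasDerivAt_log_cosh x).div ((hasDerivAt_tanh x).pow 2) (pow_ne_zero 2 hx))
  refine this.congr_deriv ?_
  simp only [id, Pi.pow_apply]
  field_simp
  ring

theorem strictMonoOn_f : StrictMonoOn f (Ioi 0) := by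
  refine strictMonoOn_of_deriv_pos (convex_Ioi 0)
    (fun x hx => (hasDerivAt_f (tanh_pos hx).ne').continuousAt.continuousWithinAt) fun x hx => ?_
  rw [interior_Ioi] at hx
  rw [(hasDerivAt_f (tanh_pos hx).ne').deriv]
  have := one_sub_tanh_sq_pos x
  have := sub_pos.2 (mul_tanh_lt_two_mul_log_cosh hx)
  have := tanh_pos hx
  positivity

theorem tendsto_f_nhdsGT_zero : Tendsto f (𝓝[>] 0) (𝓝 (1 / 2)) := by
  have hN (x : ℝ) : HasDerivAt (fun x => x * tanh x - log (cosh x)) (x * (1 - tanh x ^ 2)) x :=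
    (((hasDerivAt_id x).mul (hasDerivAt_tanh x)).sub (hasDerivAt_log_cosh x)).congr_deriv
      (by simp only [id]; ring)
  have hD (x : ℝ) : HasDerivAt (fun x => tanh x ^ 2) (2 * tanh x * (1 - tanh x ^ 2)) x :=
    ((hasDerivAt_tanh x).pow 2).congr_deriv (by simp)
  have hN0 : Tendsto (fun x => x * tanh x - log (cosh x)) (𝓝[>] 0) (𝓝 0) := by
    simpa using (hN 0).continuousAt.tendsto.mono_left nhdsWithin_le_nhds
  have hD0 : Tendsto (fun x => tanh x ^ 2) (𝓝[>] 0) (𝓝 0) := by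
    simpa using (hD 0).continuousAt.tendsto.mono_left nhdsWithin_le_nhds
  have hratio : Tendsto (fun x => x * (1 - tanh x ^ 2) / (2 * tanh x * (1 - tanh x ^ 2)))
      (𝓝[>] 0) (𝓝 (1 / 2)) := by
    refine (tendsto_div_tanh_nhdsGT_zero.div_const 2).congr' ?_
    filter_upwards [self_mem_nhdsWithin] with x hx
    have := (one_sub_tanh_sq_pos x).ne'
    field_simp
  have hD' : ∀ᶠ x in 𝓝[>] 0, 2 * tanh x * (1 - tanh x ^ 2) ≠ 0 := by
    filter_upwards [self_mem_nhdsWithin] with x hx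
    have := tanh_pos hx
    have := one_sub_tanh_sq_pos x
    positivity
  rw [funext f_eq_div]
  exact HasDerivAt.lhopital_zero_nhdsGT (.of_forall hN) (.of_forall hD) hD' hN0 hD0 hratio

theorem tendsto_f_atTop : Tendsto f atTop (𝓝 (log 2)) := by
  have hN : Tendsto (fun x => x * tanh x - log (cosh x)) atTop (𝓝 (log 2)) := by
    have := tendsto_sub_log_cosh_atTop.sub tendsto_mul_one_sub_tanh_atTop
    rw [sub_zero] at this
    exact this.congr fun x => by ring
  have := hN.div (tendsto_tanh_atTop.pow 2) (by norm_num)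
  rw [one_pow, div_one] at this
  rwa [funext f_eq_div]

theorem stmt_15 :
    StrictMonoOn f (Set.Ioi 0) ∧
    Filter.Tendsto f (nhdsWithin 0 (Set.Ioi 0)) (nhds (1 / 2)) ∧
    Filter.Tendsto f Filter.atTop (nhds (Real.log 2)) :=
  ⟨strictMonoOn_f, tendsto_f_nhdsGT_zero, tendsto_f_atTop⟩
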